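/- arXiv:2203.08070 — 2 statements merged into one kernel-verified Lean document; each statement's English description precedes it below -/
import Mathlib

section
/- Γ-switchable homomorphisms compose: if G admits a Γ-switchable homomorphism to H and H admits a Γ-switchable homomorphism to K, then G admits a Γ-switchable homomorphism to K. -/
open Equiv

/-- An `(m,n)`-mixed graph (with labelled vertex set `V`): `edge u v = some i` records an
edge `uv` of colour `i` (stored symmetrically) and `arc u v = some j` records an arc from
`u` to `v` of colour `j`. -/
structure Mixed (V : Type) (m n : ℕ) where
  edge : V → V → Option (Fin m)
  arc : V → V → Option (Fin n)

/-- An element of the switching group `S_m × (S_n ⋉ S_2ⁿ)`: a permutation `α` of the edge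
colours together with a permutation `σ` of (arc colour, arc direction) pairs; a pair
`(i, b)` records an arc of colour `i` whose direction agrees (`b = true`) or disagrees
(`b = false`) with a reference orientation. -/
abbrev SwElt (m n : ℕ) := Perm (Fin m) × Perm (Fin n × Bool)

/-- The permutation `σ` of (arc colour, direction) pairs comes from a pair
`(β, γ₁, …, γₙ) ∈ S_n × S_2ⁿ`, i.e. the new arc colour does not depend on the direction:
`σ (i, d) = (β i, γᵢ d)`. -/
def Consistent {n : ℕ} (σ : Perm (Fin n × Bool)) : Prop :=
  ∀ i : Fin n, (σ (i, true)).1 = (σ (i, false)).1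

/-- Given the arc entries `a = arc x y` and `b = arc y x`, the new entry `arc x y`
after acting by `σ` on (colour, direction relative to `(x,y)`) pairs. -/
def arcSwitch {n : ℕ} (σ : Perm (Fin n × Bool)) (a b : Option (Fin n)) : Option (Fin n) :=
  match a with
  | some i => if (σ (i, true)).2 = true then some (σ (i, true)).1 else none
  | none =>
    match b with
    | some i => if (σ (i, false)).2 = true then some (σ (i, false)).1 else none
    | none => none

/-- Switching the mixed graph `G` at the vertex `v` with respect to `π`: edge colours of
incident edges change by `π.1`, and colours and directions of incident arcs change by
`π.2`. -/
def Mixed.switch {V : Type} [DecidableEq V] {m n : ℕ} (G : Mixed V m n) (v : V)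
    (π : SwElt m n) : Mixed V m n where
  edge x y := if x = v ∨ y = v then (G.edge x y).map π.1 else G.edge x y
  arc x y := if x = v ∨ y = v then arcSwitch π.2 (G.arc x y) (G.arc y x) else G.arc x y

/-- Switching with respect to a sequence of (vertex, group element) pairs, in order. -/
def Mixed.switchSeq {V : Type} [DecidableEq V] {m n : ℕ} (G : Mixed V m n) :
    List (V × SwElt m n) → Mixed V m n
  | [] => G
  | (v, π) :: rest => (G.switch v π).switchSeq rest

/-- All group elements occurring in the sequence belong to `Γ`. -/
def MValid {V : Type} {m n : ℕ} (Γ : Subgroup (SwElt m n))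
    (L : List (V × SwElt m n)) : Prop :=
  ∀ p ∈ L, p.2 ∈ Γ

/-- `G` is a bona fide mixed graph: loop-free, edges stored symmetrically, and any pair
of vertices is joined by at most one edge or one arc (but not both). -/
def Mixed.Proper {V : Type} {m n : ℕ} (G : Mixed V m n) : Prop :=
  (∀ x, G.edge x x = none) ∧ (∀ x, G.arc x x = none) ∧
  (∀ x y, G.edge x y = G.edge y x) ∧
  (∀ x y, (G.edge x y).isSome → G.arc x y = none ∧ G.arc y x = none) ∧
  (∀ x y, (G.arc x y).isSome → G.arc y x = none)

/-- A homomorphism of `(m,n)`-mixed graphs: preserves edges with their colours, and arcs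
with their colours and directions. -/
def MHom {V W : Type} {m n : ℕ} (f : V → W) (G : Mixed V m n) (H : Mixed W m n) : Prop :=
  (∀ u v j, G.edge u v = some j → H.edge (f u) (f v) = some j) ∧
  (∀ u v j, G.arc u v = some j → H.arc (f u) (f v) = some j)

/-- A `Γ`-switchable homomorphism of `G` to `H`: a switching sequence on `G` with all
elements in `Γ`, followed by a homomorphism of mixed graphs. -/
def MSwHom {V W : Type} [DecidableEq V] {m n : ℕ} (Γ : Subgroup (SwElt m n))
    (G : Mixed V m n) (H : Mixed W m n) : Prop :=
  ∃ L, MValid Γ L ∧ ∃ f : V → W, MHom f (G.switchSeq L) H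

/-- The (colour, direction) state of the pair `(u,v)` of vertices: `some (i, true)` if
there is an arc `u → v` of colour `i`, `some (i, false)` if there is an arc `v → u` of
colour `i`. -/
def arcPair {V : Type} {m n : ℕ} (G : Mixed V m n) (u v : V) : Option (Fin n × Bool) :=
  match G.arc u v with
  | some i => some (i, true)
  | none => (G.arc v u).map (fun i => (i, false))

/-!
To compose `f : G^L → H` with a switchable homomorphism `H^M → K`, replay each switch
`(w, π)` of `M` on `G` by switching with `π` at every vertex of the fibre `f⁻¹(w)`. Since `H`
has no loops, the fibre spans no edge or arc, so these switches do not interfere and amount to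
one simultaneous switch, under which `f` remains a homomorphism to `H` switched at `w`. This
needs that `H` never has arcs in both directions between two vertices, and consistency of `π`
is exactly what preserves that property along `M`.
-/

attribute [ext] Mixed

section Switching

variable {V : Type} {m n : ℕ}

lemma Consistent.snd_ne {σ : Perm (Fin n × Bool)} (hσ : Consistent σ) (i : Fin n) :
    (σ (i, true)).2 ≠ (σ (i, false)).2 := fun h =>
  Bool.noConfusion (congrArg Prod.snd (σ.injective (Prod.ext (hσ i) h)))

lemma arcSwitch_eq_some_mono {σ : Perm (Fin n × Bool)} {a b a' b' : Option (Fin n)}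
    (ha : ∀ i, a = some i → a' = some i) (hb : ∀ i, b = some i → b' = some i)
    (hasymm : b'.isSome → a' = none) {j : Fin n} (h : arcSwitch σ a b = some j) :
    arcSwitch σ a' b' = some j := by
  rcases a with _ | i
  · rcases b with _ | i
    · simp [arcSwitch] at h
    · have hb' := hb i rfl
      simpa [arcSwitch, hb', hasymm (by simp [hb'])] using h
  · simpa [arcSwitch, ha i rfl] using h

lemma arcSwitch_asymm {σ : Perm (Fin n × Bool)} (hσ : Consistent σ) {a b : Option (Fin n)}
    (hab : a = none ∨ b = none) (h : (arcSwitch σ a b).isSome) : arcSwitch σ b a = none := by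
  have hne := hσ.snd_ne
  rcases a with _ | i <;> rcases b with _ | j <;> simp_all [arcSwitch]
  · simpa [h] using Ne.symm (hne j)
  · simpa [h] using hne i

def Mixed.Loopless (G : Mixed V m n) : Prop :=
  ∀ x, G.edge x x = none ∧ G.arc x x = none

def Mixed.ArcAsymm (G : Mixed V m n) : Prop :=
  ∀ x y, (G.arc x y).isSome → G.arc y x = none

def Mixed.Unlinked (G : Mixed V m n) (x y : V) : Prop :=
  G.edge x y = none ∧ G.edge y x = none ∧ G.arc x y = none ∧ G.arc y x = none

lemma Mixed.Unlinked.symm {G : Mixed V m n} {x y : V} (h : G.Unlinked x y) :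
    G.Unlinked y x :=
  ⟨h.2.1, h.1, h.2.2.2, h.2.2.1⟩

variable [DecidableEq V]

lemma Mixed.Loopless.switch {G : Mixed V m n} (hG : G.Loopless) (v : V) (π : SwElt m n) :
    (G.switch v π).Loopless := fun x => by
  simp [Mixed.switch, arcSwitch, (hG x).1, (hG x).2]

lemma Mixed.ArcAsymm.switch {G : Mixed V m n} (hG : G.ArcAsymm) (v : V) {π : SwElt m n}
    (hπ : Consistent π.2) : (G.switch v π).ArcAsymm := by
  intro x y h
  have hxy : G.arc x y = none ∨ G.arc y x = none := by
    rcases hx : G.arc x y with _ | i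
    · exact .inl rfl
    · exact .inr (hG x y (by simp [hx]))
  by_cases hv : x = v ∨ y = v
  · simp only [Mixed.switch, hv, or_comm (a := y = v), if_true] at h ⊢
    exact arcSwitch_asymm hπ hxy h
  · simp only [Mixed.switch, hv, or_comm (a := y = v), if_false] at h ⊢
    exact hG x y h

def Mixed.switchOn (G : Mixed V m n) (S : Finset V) (π : SwElt m n) : Mixed V m n where
  edge x y := if x ∈ S ∨ y ∈ S then (G.edge x y).map π.1 else G.edge x y
  arc x y := if x ∈ S ∨ y ∈ S then arcSwitch π.2 (G.arc x y) (G.arc y x) else G.arc x y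

lemma Mixed.switch_eq_switchOn (G : Mixed V m n) (v : V) (π : SwElt m n) :
    G.switch v π = G.switchOn {v} π := by
  ext <;> simp [Mixed.switch, Mixed.switchOn]

lemma Mixed.Unlinked.switchOn {G : Mixed V m n} {x y : V} (h : G.Unlinked x y)
    (S : Finset V) (π : SwElt m n) : (G.switchOn S π).Unlinked x y := by
  obtain ⟨h1, h2, h3, h4⟩ := h
  simp [Mixed.Unlinked, Mixed.switchOn, arcSwitch, h1, h2, h3, h4]

lemma Mixed.switchOn_switchOn {G : Mixed V m n} {S T : Finset V} (hST : Disjoint S T)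
    (hG : ∀ x ∈ S, ∀ y ∈ T, G.Unlinked x y) (π : SwElt m n) :
    (G.switchOn S π).switchOn T π = G.switchOn (S ∪ T) π := by
  have hcross : ∀ x y, x ∈ S ∨ y ∈ S → x ∈ T ∨ y ∈ T → G.Unlinked x y := by
    have hdisj := Finset.disjoint_left.mp hST
    rintro x y (hx | hy) hT
    · exact hG x hx y (hT.resolve_left (hdisj hx))
    · exact (hG y hy x (hT.resolve_right (hdisj hy))).symm
  ext x y : 3
  all_goals
    simp only [Mixed.switchOn, Finset.mem_union, or_or_or_comm (b := x ∈ T)]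
    by_cases hS : x ∈ S ∨ y ∈ S <;> by_cases hT : x ∈ T ∨ y ∈ T
    · obtain ⟨h1, -, h3, h4⟩ := hcross x y hS hT
      simp [h1, h3, h4, arcSwitch]
    all_goals simp [hS, hT, or_comm (a := y ∈ S)]

lemma Mixed.switchOn_empty (G : Mixed V m n) (π : SwElt m n) : G.switchOn ∅ π = G := by
  ext <;> simp [Mixed.switchOn]

lemma Mixed.switchSeq_append (G : Mixed V m n) (L L' : List (V × SwElt m n)) :
    G.switchSeq (L ++ L') = (G.switchSeq L).switchSeq L' := by
  induction L generalizing G with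
  | nil => rfl
  | cons p L ih => exact ih _

lemma Mixed.switchSeq_map_eq_switchOn (π : SwElt m n) {L : List V} (hL : L.Nodup) :
    ∀ G : Mixed V m n, (∀ x ∈ L, ∀ y ∈ L, G.Unlinked x y) →
      G.switchSeq (L.map (·, π)) = G.switchOn L.toFinset π := by
  induction L with
  | nil => exact fun G _ => G.switchOn_empty π |>.symm
  | cons v L ih =>
    intro G hG
    obtain ⟨hv, hL'⟩ := List.nodup_cons.mp hL
    have hG' : ∀ x ∈ L, ∀ y ∈ L, (G.switchOn {v} π).Unlinked x y := fun x hx y hy =>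
      (hG x (.tail _ hx) y (.tail _ hy)).switchOn ..
    rw [List.map_cons, Mixed.switchSeq, Mixed.switch_eq_switchOn, ih hL' _ hG',
      Mixed.switchOn_switchOn (by simpa using hv), List.toFinset_cons, Finset.insert_eq]
    simpa using fun y (hy : y ∈ L) => hG v List.mem_cons_self y (.tail _ hy)

end Switching

section Homomorphisms

variable {V W U : Type} {m n : ℕ} {G : Mixed V m n} {H : Mixed W m n} {f : V → W}

lemma Mixed.Proper.loopless (hG : G.Proper) : G.Loopless := fun x => ⟨hG.1 x, hG.2.1 x⟩

lemma Mixed.Proper.arcAsymm (hG : G.Proper) : G.ArcAsymm := hG.2.2.2.2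

lemma MValid.append {Γ : Subgroup (SwElt m n)} {L L' : List (V × SwElt m n)}
    (hL : MValid Γ L) (hL' : MValid Γ L') : MValid Γ (L ++ L') :=
  List.forall_mem_append.2 ⟨hL, hL'⟩

lemma MHom.comp {K : Mixed U m n} {g : W → U} (hf : MHom f G H) (hg : MHom g H K) :
    MHom (g ∘ f) G K :=
  ⟨fun u v j h => hg.1 _ _ j (hf.1 u v j h), fun u v j h => hg.2 _ _ j (hf.2 u v j h)⟩

lemma MHom.unlinked_of_eq (hf : MHom f G H) (hH : H.Loopless) {x y : V} (hxy : f x = f y) :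
    G.Unlinked x y := by
  have hedge : ∀ a b, f a = f b → G.edge a b = none := fun a b hab =>
    Option.eq_none_iff_forall_ne_some.2 fun j h => by simpa [hab, (hH _).1] using hf.1 a b j h
  have harc : ∀ a b, f a = f b → G.arc a b = none := fun a b hab =>
    Option.eq_none_iff_forall_ne_some.2 fun j h => by simpa [hab, (hH _).2] using hf.2 a b j h
  exact ⟨hedge x y hxy, hedge y x hxy.symm, harc x y hxy, harc y x hxy.symm⟩

variable [DecidableEq V] [DecidableEq W]

lemma MHom.switchOn_fiber (hf : MHom f G H) (hH : H.ArcAsymm) {S : Finset V} {w : W}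
    (hS : ∀ x, x ∈ S ↔ f x = w) (π : SwElt m n) :
    MHom f (G.switchOn S π) (H.switch w π) := by
  constructor
  · intro x y j h
    simp only [Mixed.switchOn, Mixed.switch, hS] at h ⊢
    split_ifs at h ⊢
    · obtain ⟨i, hi, rfl⟩ := Option.map_eq_some_iff.1 h
      simp [hf.1 x y i hi]
    · exact hf.1 x y j h
  · intro x y j h
    simp only [Mixed.switchOn, Mixed.switch, hS] at h ⊢
    split_ifs at h ⊢
    · exact arcSwitch_eq_some_mono (hf.2 x y) (hf.2 y x) (hH _ _) h
    · exact hf.2 x y j h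

lemma MHom.exists_switchSeq_switch [Fintype V] (hf : MHom f G H) (hH : H.Loopless)
    (hH' : H.ArcAsymm) (w : W) (π : SwElt m n) :
    ∃ L : List (V × SwElt m n), (∀ p ∈ L, p.2 = π) ∧ MHom f (G.switchSeq L) (H.switch w π) := by
  set S := Finset.univ.filter (f · = w)
  have hS : ∀ x, x ∈ S ↔ f x = w := by simp [S]
  refine ⟨S.toList.map (·, π), by simp, ?_⟩
  rw [Mixed.switchSeq_map_eq_switchOn π S.nodup_toList, Finset.toList_toFinset]
  · exact hf.switchOn_fiber hH' hS π
  · intro x hx y hy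
    exact hf.unlinked_of_eq hH (by simp_all)

lemma MHom.exists_switchSeq_switchSeq [Fintype V] {Γ : Subgroup (SwElt m n)}
    (hΓ : ∀ p ∈ Γ, Consistent p.2) {M : List (W × SwElt m n)} (hM : MValid Γ M)
    (hf : MHom f G H) (hH : H.Loopless) (hH' : H.ArcAsymm) :
    ∃ L, MValid Γ L ∧ MHom f (G.switchSeq L) (H.switchSeq M) := by
  induction M generalizing G H with
  | nil => exact ⟨[], by simp [MValid], hf⟩
  | cons q M ih =>
    obtain ⟨w, π⟩ := q
    have hπ : π ∈ Γ := hM _ List.mem_cons_self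
    obtain ⟨L₁, hL₁, hf₁⟩ := hf.exists_switchSeq_switch hH hH' w π
    obtain ⟨L₂, hL₂, hf₂⟩ := ih (fun p hp => hM p (.tail _ hp)) hf₁ (hH.switch w π)
      (hH'.switch w (hΓ π hπ))
    refine ⟨L₁ ++ L₂, MValid.append (fun p hp => hL₁ p hp ▸ hπ) hL₂, ?_⟩
    rwa [Mixed.switchSeq_append]

end Homomorphisms

theorem swhom_comp_general {V W U : Type} [Fintype V] [DecidableEq V] [DecidableEq W]
    {m n : ℕ} (Γ : Subgroup (SwElt m n)) (hΓ : ∀ p ∈ Γ, Consistent p.2)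
    (G : Mixed V m n) (H : Mixed W m n) (K : Mixed U m n)
    (hH : H.Proper)
    (h1 : MSwHom Γ G H) (h2 : MSwHom Γ H K) :
    MSwHom Γ G K := by
  obtain ⟨L, hL, f, hf⟩ := h1
  obtain ⟨M, hM, g, hg⟩ := h2
  obtain ⟨L', hL', hf'⟩ := hf.exists_switchSeq_switchSeq hΓ hM hH.loopless hH.arcAsymm
  refine ⟨L ++ L', hL.append hL', g ∘ f, ?_⟩
  rw [Mixed.switchSeq_append]
  exact hf'.comp hg

/-- `Γ`-switchable homomorphisms compose. -/
theorem swhom_comp {V W U : Type} [Fintype V] [DecidableEq V] [Fintype W] [DecidableEq W]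
    {m n : ℕ} (Γ : Subgroup (SwElt m n)) (hΓ : ∀ p ∈ Γ, Consistent p.2)
    (G : Mixed V m n) (H : Mixed W m n) (K : Mixed U m n)
    (hG : G.Proper) (hH : H.Proper) (hK : K.Proper)
    (h1 : MSwHom Γ G H) (h2 : MSwHom Γ H K) :
    MSwHom Γ G K :=
  swhom_comp_general Γ hΓ G H K hH h1 h2
end

section
/- Let G be a connected m-edge-coloured graph, Γ ≤ S_m transitive, and i ∈ [m]. Let F_Γ be the class of m-edge-coloured cycles that do not admit a Γ-switchable homomorphism to K_2^i. Then G admits a Γ-switchable homomorphism to K_2^i if and only if no cycle C ∈ F_Γ admits a Γ-switchable homomorphism to G. -/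
open Equiv

/-- An `m`-edge-coloured graph on vertex set `V`: `G u v = some i` means there is an
edge `uv` of colour `i` (stored symmetrically), `none` means no edge. -/
abbrev EC (V : Type) (m : ℕ) := V → V → Option (Fin m)

/-- The colouring is stored symmetrically. -/
def ECSymm {V : Type} {m : ℕ} (G : EC V m) : Prop := ∀ u v, G u v = G v u

/-- Switching at a vertex `v` with a permutation `π` of the colours. -/
def ECswitch {V : Type} [DecidableEq V] {m : ℕ} (G : EC V m) (v : V) (π : Perm (Fin m)) :
    EC V m :=
  fun x y => if x = v ∨ y = v then (G x y).map π else G x y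

/-- Switching with respect to a sequence of (vertex, permutation) pairs, applied in order. -/
def ECswitchSeq {V : Type} [DecidableEq V] {m : ℕ} (G : EC V m) :
    List (V × Perm (Fin m)) → EC V m
  | [] => G
  | (v, π) :: rest => ECswitchSeq (ECswitch G v π) rest

/-- All permutations occurring in the sequence belong to the group `Γ`. -/
def ValidSeq {V : Type} {m : ℕ} (Γ : Subgroup (Perm (Fin m)))
    (L : List (V × Perm (Fin m))) : Prop :=
  ∀ p ∈ L, p.2 ∈ Γ

/-- `Γ`-switch equivalence of two `m`-edge-coloured graphs on the same vertex set. -/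
def SwEquiv {V : Type} [DecidableEq V] {m : ℕ} (Γ : Subgroup (Perm (Fin m)))
    (G G' : EC V m) : Prop :=
  ∃ L, ValidSeq Γ L ∧ ECswitchSeq G L = G'

/-- `G` is monochromatic of colour `i`. -/
def Mono {V : Type} {m : ℕ} (G : EC V m) (i : Fin m) : Prop :=
  ∀ u v j, G u v = some j → j = i

/-- `G` admits a `Γ`-switchable homomorphism to `K₂^i` (the single edge of colour `i`). -/
def SwHomK2 {V : Type} [DecidableEq V] {m : ℕ} (Γ : Subgroup (Perm (Fin m)))
    (G : EC V m) (i : Fin m) : Prop :=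
  ∃ L, ValidSeq Γ L ∧ ∃ f : V → Bool,
    ∀ u v j, ECswitchSeq G L u v = some j → f u ≠ f v ∧ j = i

/-- A `Γ`-switchable homomorphism between `m`-edge-coloured graphs. -/
def SwHom {V W : Type} [DecidableEq V] {m : ℕ} (Γ : Subgroup (Perm (Fin m)))
    (G : EC V m) (H : EC W m) : Prop :=
  ∃ L, ValidSeq Γ L ∧ ∃ f : V → W,
    ∀ u v j, ECswitchSeq G L u v = some j → H (f u) (f v) = some j

/-- `Γ` acts transitively on the colour set `[m]`. -/
def TransOn {m : ℕ} (Γ : Subgroup (Perm (Fin m))) : Prop :=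
  ∀ i j : Fin m, ∃ π ∈ Γ, π i = j

/-- `G` is bipartite. -/
def Bip {V : Type} {m : ℕ} (G : EC V m) : Prop :=
  ∃ g : V → Bool, ∀ u v, (G u v).isSome → g u ≠ g v

/-- `G` (its underlying graph) is connected. -/
def Conn {V : Type} {m : ℕ} (G : EC V m) : Prop :=
  ∀ u v : V, Relation.ReflTransGen (fun a b => (G a b).isSome) u v

/-- The `m`-edge-coloured cycle of length `n` on `ZMod n`, where the edge from `x` to
`x + 1` has colour `c x`. -/
def cycleFromFn {m : ℕ} (n : ℕ) (c : ZMod n → Fin m) : EC (ZMod n) m :=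
  fun x y => if y = x + 1 then some (c x) else if x = y + 1 then some (c y) else none

/-- The cycle of length `n` that is nearly monochromatic of colours `(i, j)`:
all edges have colour `i` except the edge from `-1` (that is, `n - 1`) to `0`,
which has colour `j`. -/
def nearCycle {m : ℕ} (n : ℕ) (i j : Fin m) : EC (ZMod n) m :=
  cycleFromFn n (fun x => if x = -1 then j else i)

/-- The monochromatic cycle of length `n` of colour `i`. -/
def monoCycle {m : ℕ} (n : ℕ) (i : Fin m) : EC (ZMod n) m :=
  cycleFromFn n (fun _ => i)

/-- The `Γ`-substitution class `⟨i⟩`: the colours `j` such that the `4`-cycle nearly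
monochromatic of colours `(i, j)` can be switched to be monochromatic of colour `i`. -/
def subClass {m : ℕ} (Γ : Subgroup (Perm (Fin m))) (i : Fin m) : Set (Fin m) :=
  {j | SwEquiv Γ (nearCycle 4 i j) (monoCycle 4 i)}

/-- The underlying simple graph of an `m`-edge-coloured graph. -/
def ECtoSimple {V : Type} {m : ℕ} (G : EC V m) (h : ECSymm G) : SimpleGraph V where
  Adj u v := u ≠ v ∧ (G u v).isSome
  symm := by
    constructor
    intro u v hv
    exact ⟨Ne.symm hv.1, by rw [h v u]; exact hv.2⟩
  loopless := by constructor; intro v hv; exact hv.1 rfl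

/-- The number of edges of an `m`-edge-coloured graph. -/
def edgeCount {V : Type} [Fintype V] {m : ℕ} (G : EC V m) : ℕ :=
  (Finset.univ.filter (fun p : V × V => (G p.1 p.2).isSome)).card / 2

/-!
A switching sequence acts on each edge `ab` by the composite of the permutations switched at
`a` or `b` (`ECswitchSeq_apply`). Pulling switches back along a homomorphism shows that
switchable homomorphisms into loopless graphs compose, which gives the forward direction.

Conversely, by transitivity of `Γ` we may switch `G` so that every vertex is joined to a root `r`
by a walk of colour `i`. For an edge `ab` of colour `j`, the walks to `a` and `b` closed up by
`ab` form a closed walk of colour `i` except at `ab`, i.e. a cycle mapping to `G`; by hypothesis it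
maps switchably to `K₂ⁱ`. So it has even length, and `G` is bipartite by the parity of the walks.
Moreover `j` lies in the orbit of `i` under `K = Stab_Γ(i) ⬝ [Γ, Γ]`: in the abelian group `Γ / K`
the effect of a switching sequence on an edge is the product of its effects at the two ends, so
the alternating product of the edge effects around an even cycle telescopes to `1`, while every
edge effect except the one on `ab` fixes `i`. Finally, an edge whose colour is in that orbit is
switched to colour `i` by switches at its two ends that change the other edges at one end by
permutations fixing `i` only: a stabiliser element is switched at one end, a commutator
`a b a⁻¹ b⁻¹` by switching `b⁻¹, a⁻¹, b, a` alternately at the two ends.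
-/

section Switching

variable {V : Type} {m : ℕ}

lemma ValidSeq.append {Γ : Subgroup (Perm (Fin m))} {L₁ L₂ : List (V × Perm (Fin m))}
    (h₁ : ValidSeq Γ L₁) (h₂ : ValidSeq Γ L₂) : ValidSeq Γ (L₁ ++ L₂) := by
  intro p hp
  rcases List.mem_append.1 hp with hp | hp
  exacts [h₁ p hp, h₂ p hp]

def invSeq (L : List (V × Perm (Fin m))) : List (V × Perm (Fin m)) :=
  (L.map fun p => (p.1, p.2⁻¹)).reverse

lemma ValidSeq.invSeq {Γ : Subgroup (Perm (Fin m))} {L : List (V × Perm (Fin m))}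
    (h : ValidSeq Γ L) : ValidSeq Γ (invSeq L) := by
  intro p hp
  obtain ⟨q, hq, rfl⟩ := List.mem_map.1 (List.mem_reverse.1 hp)
  exact Γ.inv_mem (h q hq)

variable [DecidableEq V]

def switchPerm (L : List (V × Perm (Fin m))) (S : Finset V) : Perm (Fin m) :=
  (L.map fun p => if p.1 ∈ S then p.2 else 1).reverse.prod

@[simp]
lemma switchPerm_nil (S : Finset V) : switchPerm ([] : List (V × Perm (Fin m))) S = 1 := rfl

lemma switchPerm_cons (v : V) (π : Perm (Fin m)) (L : List (V × Perm (Fin m))) (S : Finset V) :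
    switchPerm ((v, π) :: L) S = switchPerm L S * if v ∈ S then π else 1 := by
  simp [switchPerm]

lemma switchPerm_append (L₁ L₂ : List (V × Perm (Fin m))) (S : Finset V) :
    switchPerm (L₁ ++ L₂) S = switchPerm L₂ S * switchPerm L₁ S := by
  simp [switchPerm]

lemma switchPerm_congr {L : List (V × Perm (Fin m))} {S S' : Finset V}
    (h : ∀ p ∈ L, p.1 ∈ S ↔ p.1 ∈ S') : switchPerm L S = switchPerm L S' := by
  unfold switchPerm
  rw [List.map_congr_left fun p hp => if_congr (h p hp) rfl rfl]

lemma switchPerm_mem {Γ : Subgroup (Perm (Fin m))} {L : List (V × Perm (Fin m))}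
    (hL : ValidSeq Γ L) (S : Finset V) : switchPerm L S ∈ Γ := by
  refine Subgroup.list_prod_mem _ fun π hπ => ?_
  obtain ⟨p, hp, rfl⟩ := List.mem_map.1 (List.mem_reverse.1 hπ)
  split_ifs
  exacts [hL p hp, Γ.one_mem]

lemma ECswitchSeq_apply (X : EC V m) (L : List (V × Perm (Fin m))) (a b : V) :
    ECswitchSeq X L a b = (X a b).map (switchPerm L {a, b}) := by
  induction L generalizing X with
  | nil => simp [ECswitchSeq]
  | cons p L ih =>
    obtain ⟨v, π⟩ := p
    simp only [ECswitchSeq, ih, ECswitch, switchPerm_cons, Finset.mem_insert,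
      Finset.mem_singleton, eq_comm (a := v)]
    split_ifs <;> simp [Option.map_map, Perm.coe_mul]

lemma ECswitchSeq_append (X : EC V m) (L₁ L₂ : List (V × Perm (Fin m))) :
    ECswitchSeq X (L₁ ++ L₂) = ECswitchSeq (ECswitchSeq X L₁) L₂ := by
  induction L₁ generalizing X with
  | nil => rfl
  | cons p L ih => exact ih _

lemma ECswitchSeq_isSome (X : EC V m) (L : List (V × Perm (Fin m))) (a b : V) :
    (ECswitchSeq X L a b).isSome = (X a b).isSome := by
  simp [ECswitchSeq_apply]

lemma ECSymm.switchSeq {X : EC V m} (hX : ECSymm X) (L : List (V × Perm (Fin m))) :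
    ECSymm (ECswitchSeq X L) := by
  intro a b
  rw [ECswitchSeq_apply, ECswitchSeq_apply, hX, Finset.pair_comm]

lemma switchPerm_invSeq (L : List (V × Perm (Fin m))) (S : Finset V) :
    switchPerm (invSeq L) S = (switchPerm L S)⁻¹ := by
  simp [switchPerm, invSeq, List.prod_inv_reverse, apply_ite (· ⁻¹), Function.comp_def]

lemma ECswitchSeq_invSeq (X : EC V m) (L : List (V × Perm (Fin m))) :
    ECswitchSeq (ECswitchSeq X L) (invSeq L) = X := by
  funext a b
  rw [ECswitchSeq_apply, ECswitchSeq_apply, switchPerm_invSeq, Option.map_map]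
  simp [Function.comp_def]

end Switching

section Homomorphisms

variable {U V : Type} [DecidableEq U] [DecidableEq V] {m : ℕ} {Γ : Subgroup (Perm (Fin m))}

lemma switchPerm_map_prodMk {xs : List U} (hxs : xs.Nodup) {a b : U} (hab : ¬(a ∈ xs ∧ b ∈ xs))
    (π : Perm (Fin m)) :
    switchPerm (xs.map (·, π)) {a, b} = if a ∈ xs ∨ b ∈ xs then π else 1 := by
  induction xs with
  | nil => simp
  | cons x xs ih =>
    obtain ⟨hx, hxs⟩ := List.nodup_cons.1 hxs
    rw [List.map_cons, switchPerm_cons, ih hxs (fun h => hab ⟨.tail _ h.1, .tail _ h.2⟩)]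
    simp only [List.mem_cons, Finset.mem_insert, Finset.mem_singleton] at hab ⊢
    by_cases ha : a = x
    · subst ha; simp_all
    by_cases hb : b = x
    · subst hb; simp_all
    simp [ha, hb, Ne.symm ha, Ne.symm hb]

lemma SwHom.switch [Fintype U] {C : EC U m} {X : EC V m} (h : SwHom Γ C X)
    (hX : ∀ w, X w w = none) (w : V) {π : Perm (Fin m)} (hπ : π ∈ Γ) :
    SwHom Γ C (ECswitch X w π) := by
  obtain ⟨S, hS, φ, hφ⟩ := h
  -- switch the whole fibre of `w`: as `φ` collapses no edge, an edge of `C` then receives `π`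
  -- exactly once if its image is incident with `w`, and not at all otherwise
  set fiber := (Finset.univ.filter (φ · = w)).toList
  have hfiber : ∀ x, x ∈ fiber ↔ φ x = w := by simp [fiber]
  refine ⟨S ++ fiber.map (·, π), hS.append (by simp [ValidSeq, hπ]), φ, fun a b j hj => ?_⟩
  rw [ECswitchSeq_append] at hj
  obtain ⟨j₀, hj₀⟩ : ∃ j₀, ECswitchSeq C S a b = some j₀ := by
    rw [← Option.isSome_iff_exists, ← ECswitchSeq_isSome _ (fiber.map (·, π)), hj]; rfl
  have hab := hφ a b j₀ hj₀
  have hne : φ a ≠ φ b := fun he => by rw [he, hX] at hab; cases hab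
  rw [ECswitchSeq_apply, switchPerm_map_prodMk (Finset.nodup_toList _)
    (by rw [hfiber, hfiber]; rintro ⟨rfl, h⟩; exact hne h.symm), hj₀] at hj
  simp only [ECswitch, eq_comm (b := w)] at hj ⊢
  split_ifs at hj ⊢ <;> simp_all

lemma SwHom.switchSeq [Fintype U] {C : EC U m} {X : EC V m} (h : SwHom Γ C X)
    (hX : ∀ w, X w w = none) {L : List (V × Perm (Fin m))} (hL : ValidSeq Γ L) :
    SwHom Γ C (ECswitchSeq X L) := by
  induction L generalizing X with
  | nil => exact h
  | cons p L ih =>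
    obtain ⟨w, π⟩ := p
    exact ih (h.switch hX w (hL _ List.mem_cons_self)) (fun v => by simp [ECswitch, hX])
      fun p hp => hL p (.tail _ hp)

lemma SwHomK2.loopless {G : EC V m} {i : Fin m} (h : SwHomK2 Γ G i) (w : V) :
    G w w = none := by
  obtain ⟨L, -, f, hf⟩ := h
  rw [← Option.not_isSome_iff_eq_none, ← ECswitchSeq_isSome _ L, Option.isSome_iff_exists]
  rintro ⟨j, hj⟩
  exact (hf w w j hj).1 rfl

lemma SwHom.swHomK2 [Fintype U] {C : EC U m} {G : EC V m} {i : Fin m} (hC : SwHom Γ C G)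
    (hG : SwHomK2 Γ G i) : SwHomK2 Γ C i := by
  have hloop := hG.loopless
  obtain ⟨L, hL, f, hf⟩ := hG
  obtain ⟨S, hS, φ, hφ⟩ := hC.switchSeq hloop hL
  exact ⟨S, hS, f ∘ φ, fun a b j hj => hf _ _ j (hφ a b j hj)⟩

end Homomorphisms

section Cycles

variable {V : Type} {m : ℕ} {Γ : Subgroup (Perm (Fin m))} {i : Fin m}

lemma cycleFromFn_apply_add_one {l : ℕ} (c : ZMod l → Fin m) (x : ZMod l) :
    cycleFromFn l c x (x + 1) = some (c x) := by
  simp [cycleFromFn]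

lemma ECswitchSeq_cycleFromFn_apply_add_one {l : ℕ} (c : ZMod l → Fin m)
    (L : List (ZMod l × Perm (Fin m))) (x : ZMod l) :
    ECswitchSeq (cycleFromFn l c) L x (x + 1) = some (switchPerm L {x, x + 1} (c x)) := by
  rw [ECswitchSeq_apply, cycleFromFn_apply_add_one]
  rfl

lemma even_of_forall_ne_add_one {l : ℕ} (f : ZMod l → Bool) (hf : ∀ x, f x ≠ f (x + 1)) :
    Even l := by
  have key : ∀ k : ℕ, f k = f 0 ↔ Even k := by
    intro k
    induction k with
    | zero => simp
    | succ k ih =>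
      rw [Nat.cast_succ, Nat.even_add_one, ← ih]
      have := hf k
      revert this
      cases f (k : ZMod l) <;> cases f ((k : ZMod l) + 1) <;> cases f 0 <;> simp_all
  simpa using key l

lemma SwHomK2.even_of_cycle {l : ℕ} {c : ZMod l → Fin m}
    (h : SwHomK2 Γ (cycleFromFn l c) i) : Even l := by
  obtain ⟨R, -, f, hf⟩ := h
  exact even_of_forall_ne_add_one f fun x =>
    (hf x (x + 1) _ (ECswitchSeq_cycleFromFn_apply_add_one c R x)).1

lemma swHom_cycleFromFn {l : ℕ} {c : ZMod l → Fin m} {X : EC V m} (hX : ECSymm X)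
    (φ : ZMod l → V) (hφ : ∀ x, X (φ x) (φ (x + 1)) = some (c x)) :
    SwHom Γ (cycleFromFn l c) X := by
  refine ⟨[], by simp [ValidSeq], φ, fun x y j hj => ?_⟩
  simp only [ECswitchSeq, cycleFromFn] at hj
  split_ifs at hj with h₁ h₂ <;> cases hj
  · rw [h₁, hφ]
  · rw [h₂, hX, hφ]

lemma swHom_cycleFromFn_of_closed_walk {l : ℕ} [NeZero l] {c : ZMod l → Fin m} {X : EC V m}
    (hX : ECSymm X) (W : ℕ → V) (hW : W l = W 0)
    (hc : ∀ k < l, X (W k) (W (k + 1)) = some (c k)) :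
    SwHom Γ (cycleFromFn l c) X := by
  refine swHom_cycleFromFn hX (fun x => W x.val) fun x => ?_
  have hval : (x + 1).val = (x.val + 1) % l := by
    rw [← ZMod.val_natCast, Nat.cast_succ, ZMod.natCast_zmod_val]
  have hnext : W (x + 1).val = W (x.val + 1) := by
    rcases Nat.lt_or_eq_of_le (ZMod.val_lt x) with h | h
    · rw [hval, Nat.mod_eq_of_lt h]
    · rw [hval, show x.val + 1 = l from h, Nat.mod_self, hW]
  simpa [hnext] using hc x.val (ZMod.val_lt x)

end Cycles

lemma prod_range_mul_succ_zpow_neg_one_pow {A : Type*} [CommGroup A] {l : ℕ} (hl : Even l)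
    (s : ℕ → A) (hs : s l = s 0) :
    ∏ k ∈ Finset.range l, (s k * s (k + 1)) ^ ((-1 : ℤ) ^ k) = 1 := by
  have h : ∀ k, (s k * s (k + 1)) ^ ((-1 : ℤ) ^ k) =
      s k ^ ((-1 : ℤ) ^ k) / s (k + 1) ^ ((-1 : ℤ) ^ (k + 1)) := by
    intro k
    rw [pow_succ, mul_neg_one, zpow_neg, div_inv_eq_mul, mul_zpow]
  simp only [h, Finset.prod_range_div', hs, hl.neg_one_pow, pow_zero, zpow_one, div_self']

section SwitchClass

variable {m : ℕ} (Γ : Subgroup (Perm (Fin m))) (i : Fin m)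

-- this is `Γ ⧸ (Stab_Γ(i) ⬝ [Γ, Γ])`
abbrev SwitchQuotient : Type :=
  Abelianization Γ ⧸ (MulAction.stabilizer Γ i).map Abelianization.of

def switchKernel : Subgroup (Perm (Fin m)) :=
  (MulAction.stabilizer Γ i ⊔ commutator Γ).map Γ.subtype

def switchClass : Set (Fin m) :=
  MulAction.orbit (switchKernel Γ i) i

open Classical in
noncomputable def switchChar (π : Perm (Fin m)) : SwitchQuotient Γ i :=
  if h : π ∈ Γ then QuotientGroup.mk (Abelianization.of ⟨π, h⟩) else 1

variable {Γ i}

lemma switchChar_mul {a b : Perm (Fin m)} (ha : a ∈ Γ) (hb : b ∈ Γ) :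
    switchChar Γ i (a * b) = switchChar Γ i a * switchChar Γ i b := by
  simp only [switchChar, dif_pos ha, dif_pos hb, dif_pos (Γ.mul_mem ha hb)]
  rfl

lemma switchChar_one : switchChar Γ i 1 = 1 := by
  rw [switchChar, dif_pos Γ.one_mem]
  exact (congrArg _ (map_one Abelianization.of)).trans (QuotientGroup.mk_one _)

lemma switchChar_eq_one_iff {π : Perm (Fin m)} (h : π ∈ Γ) :
    switchChar Γ i π = 1 ↔ π ∈ switchKernel Γ i := by
  rw [switchChar, dif_pos h, QuotientGroup.eq_one_iff, ← Subgroup.mem_comap,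
    Subgroup.comap_map_eq, Abelianization.ker_of, switchKernel,
    ← Subgroup.mem_map_iff_mem Γ.subtype_injective]
  rfl

lemma mem_switchKernel_of_apply_eq {π : Perm (Fin m)} (h : π ∈ Γ) (hπ : π i = i) :
    π ∈ switchKernel Γ i :=
  ⟨⟨π, h⟩, Subgroup.mem_sup_left (MulAction.mem_stabilizer_iff.2 hπ), rfl⟩

lemma mem_switchClass_iff {j : Fin m} :
    j ∈ switchClass Γ i ↔ ∃ g ∈ switchKernel Γ i, g i = j :=
  ⟨fun ⟨g, hg⟩ => ⟨g, g.2, hg⟩, fun ⟨g, hg, hgj⟩ => ⟨⟨g, hg⟩, hgj⟩⟩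

lemma apply_mem_switchClass {π : Perm (Fin m)} (hπ : π ∈ switchKernel Γ i) {j : Fin m}
    (hj : j ∈ switchClass Γ i) : π j ∈ switchClass Γ i := by
  obtain ⟨g, hg, rfl⟩ := mem_switchClass_iff.1 hj
  exact mem_switchClass_iff.2 ⟨π * g, mul_mem hπ hg, rfl⟩

lemma switchChar_switchPerm {V : Type} [DecidableEq V] {L : List (V × Perm (Fin m))}
    (hL : ValidSeq Γ L) (S : Finset V) :
    switchChar Γ i (switchPerm L S) =
      (L.map fun p => if p.1 ∈ S then switchChar Γ i p.2 else 1).prod := by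
  induction L with
  | nil => exact switchChar_one
  | cons p L ih =>
    obtain ⟨v, π⟩ := p
    have hπ : π ∈ Γ := hL _ List.mem_cons_self
    have hL' : ValidSeq Γ L := fun q hq => hL q (.tail _ hq)
    rw [switchPerm_cons, switchChar_mul (switchPerm_mem hL' S) (by split_ifs <;> simp [hπ]),
      ih hL', List.map_cons, List.prod_cons, mul_comm]
    split_ifs <;> simp [switchChar_one]

lemma switchChar_switchPerm_pair {V : Type} [DecidableEq V] {L : List (V × Perm (Fin m))}
    (hL : ValidSeq Γ L) {a b : V} (hab : a ≠ b) :
    switchChar Γ i (switchPerm L {a, b}) =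
      switchChar Γ i (switchPerm L {a}) * switchChar Γ i (switchPerm L {b}) := by
  simp only [switchChar_switchPerm hL, ← List.prod_map_mul]
  congr 1
  refine List.map_congr_left fun p _ => ?_
  by_cases ha : p.1 = a <;> by_cases hb : p.1 = b <;> simp_all
lemma SwHomK2.mem_switchClass_of_cycle {l : ℕ} [NeZero l] {c : ZMod l → Fin m} {x₀ : ZMod l}
    (h : SwHomK2 Γ (cycleFromFn l c) i) (hc : ∀ x ≠ x₀, c x = i) : c x₀ ∈ switchClass Γ i := by
  have hl := h.even_of_cycle
  obtain ⟨R, hR, f, hf⟩ := h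
  set P : ZMod l → Perm (Fin m) := fun x => switchPerm R {x, x + 1}
  have hP : ∀ x, P x (c x) = i := fun x =>
    (hf x (x + 1) _ (ECswitchSeq_cycleFromFn_apply_add_one c R x)).2
  have hne : ∀ x : ZMod l, x ≠ x + 1 := by
    intro x hx
    have : (1 : ZMod l) = 0 := by simpa using hx.symm
    rw [ZMod.one_eq_zero_iff] at this
    exact Nat.not_even_one (this ▸ hl)
  set s : ℕ → SwitchQuotient Γ i := fun k => switchChar Γ i (switchPerm R {(k : ZMod l)})
  have hPs : ∀ k : ℕ, switchChar Γ i (P k) = s k * s (k + 1) := by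
    intro k
    simp only [P, s, switchChar_switchPerm_pair hR (hne _), Nat.cast_succ]
  have htel := prod_range_mul_succ_zpow_neg_one_pow hl s (by simp [s])
  simp only [← hPs] at htel
  rw [Finset.prod_eq_single x₀.val (fun k hk hkx => ?_) (by simp [ZMod.val_lt])] at htel
  · have hχ : switchChar Γ i (P x₀) = 1 := by
      rcases neg_one_pow_eq_or ℤ x₀.val with h | h <;>
        simpa [h, ZMod.natCast_zmod_val] using htel
    have hker := (switchChar_eq_one_iff (switchPerm_mem hR _)).1 hχ
    exact mem_switchClass_iff.2 ⟨(P x₀)⁻¹, inv_mem hker, by rw [Perm.inv_eq_iff_eq, hP]⟩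
  · have hk : (k : ZMod l) ≠ x₀ := by
      rintro rfl
      exact hkx (ZMod.val_cast_of_lt (Finset.mem_range.1 hk)).symm
    rw [(switchChar_eq_one_iff (switchPerm_mem hR _)).2
      (mem_switchKernel_of_apply_eq (switchPerm_mem hR _) (hc k hk ▸ hP k)), one_zpow]

end SwitchClass

section Monochromatic

variable {V : Type} [DecidableEq V] {m : ℕ} {Γ : Subgroup (Perm (Fin m))} {i : Fin m}

-- switching an edge `uv` by an element of this group creates no new edge of colour `≠ i`
variable (Γ i) in
def edgeSwitchGroup (u v : V) : Subgroup (Perm (Fin m)) where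
  carrier := {w | ∃ T : List (V × Perm (Fin m)), ValidSeq Γ T ∧ (∀ p ∈ T, p.1 = u ∨ p.1 = v) ∧
    switchPerm T {u, v} = w ∧ switchPerm T {u} = 1 ∧ switchPerm T {v} i = i}
  one_mem' := ⟨[], by simp [ValidSeq]⟩
  mul_mem' := by
    rintro _ _ ⟨T, hT, hTs, rfl, hTu, hTv⟩ ⟨T', hT', hTs', rfl, hTu', hTv'⟩
    refine ⟨T' ++ T, hT'.append hT, fun p hp => ?_, switchPerm_append .., ?_, ?_⟩
    · rcases List.mem_append.1 hp with hp | hp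
      exacts [hTs' p hp, hTs p hp]
    · rw [switchPerm_append, hTu, hTu', one_mul]
    · rw [switchPerm_append, Perm.mul_apply, hTv', hTv]
  inv_mem' := by
    rintro _ ⟨T, hT, hTs, rfl, hTu, hTv⟩
    refine ⟨invSeq T, hT.invSeq, fun p hp => ?_, switchPerm_invSeq .., ?_, ?_⟩
    · obtain ⟨q, hq, rfl⟩ := List.mem_map.1 (List.mem_reverse.1 hp)
      exact hTs q hq
    · rw [switchPerm_invSeq, hTu, inv_one]
    · rw [switchPerm_invSeq, Perm.inv_eq_iff_eq, hTv]

lemma switchKernel_le_edgeSwitchGroup {u v : V} (huv : u ≠ v) :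
    switchKernel Γ i ≤ edgeSwitchGroup Γ i u v := by
  rw [switchKernel, Subgroup.map_le_iff_le_comap, sup_le_iff, commutator_def,
    Subgroup.commutator_le]
  constructor
  · intro g hg
    refine ⟨[(v, g)], by simp [ValidSeq], by simp, ?_, ?_, ?_⟩ <;>
      simp [switchPerm, huv.symm]
    exact MulAction.mem_stabilizer_iff.1 hg
  · rintro a - b -
    refine ⟨[(v, b⁻¹), (u, a⁻¹), (v, b), (u, a)], by simp [ValidSeq], by simp, ?_, ?_, ?_⟩ <;>
      simp [switchPerm, huv, huv.symm, commutatorElement_def, mul_assoc]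

lemma exists_switchSeq_of_mem_edgeSwitchGroup {u v : V} (huv : u ≠ v) {w : Perm (Fin m)}
    (hw : w ∈ edgeSwitchGroup Γ i u v) :
    ∃ T, ValidSeq Γ T ∧ ∀ a b : V,
      (u ∈ ({a, b} : Finset V) ∧ v ∈ ({a, b} : Finset V) → switchPerm T {a, b} = w) ∧
      (¬(u ∈ ({a, b} : Finset V) ∧ v ∈ ({a, b} : Finset V)) →
        switchPerm T {a, b} ∈ switchKernel Γ i ∧ switchPerm T {a, b} i = i) := by
  obtain ⟨T, hT, hTs, hTuv, hTu, hTv⟩ := hw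
  have hcongr : ∀ S S' : Finset V, (u ∈ S ↔ u ∈ S') → (v ∈ S ↔ v ∈ S') →
      switchPerm T S = switchPerm T S' := fun S S' hu hv =>
    switchPerm_congr fun p hp => by rcases hTs p hp with h | h <;> rw [h] <;> assumption
  refine ⟨T, hT, fun a b => ⟨fun ⟨hu, hv⟩ => ?_, fun h => ?_⟩⟩
  · rw [hcongr _ {u, v} (by simp [hu]) (by simp [hv]), hTuv]
  suffices hfix : switchPerm T {a, b} i = i from
    ⟨mem_switchKernel_of_apply_eq (switchPerm_mem hT _) hfix, hfix⟩
  by_cases hu : u ∈ ({a, b} : Finset V)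
  · have hv : v ∉ ({a, b} : Finset V) := fun hv => h ⟨hu, hv⟩
    rw [hcongr _ {u} (by simp [hu]) (by simp [hv, huv.symm]), hTu]
    rfl
  by_cases hv : v ∈ ({a, b} : Finset V)
  · rwa [hcongr _ {v} (by simp [hu, huv]) (by simp [hv])]
  · rw [hcongr _ ∅ (by simp [hu]) (by simp [hv])]
    simp [switchPerm]

lemma exists_switchSeq_fix_edge {X : EC V m} (hX : ECSymm X)
    (hK : ∀ a b j, X a b = some j → j ∈ switchClass Γ i) {u v : V} (huv : u ≠ v) {j : Fin m}
    (hj : X u v = some j) :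
    ∃ T, ValidSeq Γ T ∧ ECswitchSeq X T u v = some i ∧
      (∀ a b, X a b = some i → ECswitchSeq X T a b = some i) ∧
      ∀ a b k, ECswitchSeq X T a b = some k → k ∈ switchClass Γ i := by
  obtain ⟨g, hgK, hg⟩ := mem_switchClass_iff.1 (hK u v j hj)
  obtain ⟨T, hT, hTS⟩ :=
    exists_switchSeq_of_mem_edgeSwitchGroup huv (switchKernel_le_edgeSwitchGroup huv (inv_mem hgK))
  have hfixed : ∀ a b, ECswitchSeq X T a b = some i ∨
      ∃ π ∈ switchKernel Γ i, π i = i ∧ ECswitchSeq X T a b = (X a b).map π := by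
    intro a b
    rw [ECswitchSeq_apply]
    by_cases huvab : u ∈ ({a, b} : Finset V) ∧ v ∈ ({a, b} : Finset V)
    · have hab : X a b = some j := by
        obtain ⟨hu, hv⟩ := huvab
        simp only [Finset.mem_insert, Finset.mem_singleton] at hu hv
        rcases hu with rfl | rfl <;> rcases hv with rfl | rfl
        exacts [absurd rfl huv, hj, hX _ _ ▸ hj, absurd rfl huv]
      rw [hab, (hTS a b).1 huvab, Option.map_some, ← hg, Perm.coe_inv, Equiv.symm_apply_apply]
      exact .inl rfl
    · exact .inr ⟨_, ((hTS a b).2 huvab).1, ((hTS a b).2 huvab).2, rfl⟩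
  refine ⟨T, hT, ?_, fun a b hab => ?_, fun a b k hk => ?_⟩
  · rw [ECswitchSeq_apply, hj, (hTS u v).1 (by simp), Option.map_some, ← hg, Perm.coe_inv,
      Equiv.symm_apply_apply]
  · rcases hfixed a b with h | ⟨π, -, hπ, h⟩
    · exact h
    · rw [h, hab, Option.map_some, hπ]
  · rcases hfixed a b with h | ⟨π, hπK, -, h⟩
    · exact (Option.some_injective _ (hk.symm.trans h)) ▸ MulAction.mem_orbit_self i
    · obtain ⟨k₀, hk₀⟩ := Option.map_eq_some_iff.1 (h ▸ hk)
      exact hk₀.2 ▸ apply_mem_switchClass hπK (hK a b k₀ hk₀.1)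

variable [Fintype V]

def badEdges (X : EC V m) (i : Fin m) : Finset (V × V) :=
  Finset.univ.filter fun p => X p.1 p.2 ≠ none ∧ X p.1 p.2 ≠ some i

lemma exists_switchSeq_mono {X : EC V m} (hX : ECSymm X) (hloop : ∀ w, X w w = none)
    (hK : ∀ a b j, X a b = some j → j ∈ switchClass Γ i) :
    ∃ L, ValidSeq Γ L ∧ Mono (ECswitchSeq X L) i := by
  induction hn : (badEdges X i).card using Nat.strong_induction_on generalizing X with
  | _ n ih =>
  by_cases hbad : badEdges X i = ∅
  · refine ⟨[], by simp [ValidSeq], fun a b j hab => ?_⟩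
    replace hab : X a b = some j := hab
    by_contra hji
    have : (a, b) ∈ badEdges X i := by simp [badEdges, hab, hji]
    simp [hbad] at this
  obtain ⟨⟨u, v⟩, huv⟩ := Finset.nonempty_iff_ne_empty.2 hbad
  have huv' := huv
  simp only [badEdges, Finset.mem_filter, Finset.mem_univ, true_and] at huv'
  obtain ⟨j, hj⟩ := Option.ne_none_iff_exists'.1 huv'.1
  have hne : u ≠ v := by
    rintro rfl
    rw [hloop] at hj
    cases hj
  obtain ⟨T, hT, hTuv, hTi, hTK⟩ := exists_switchSeq_fix_edge hX hK hne hj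
  have hsub : badEdges (ECswitchSeq X T) i ⊂ badEdges X i := by
    refine (Finset.ssubset_iff_of_subset fun p hp => ?_).2
      ⟨(u, v), huv, by simp [badEdges, hTuv]⟩
    simp only [badEdges, Finset.mem_filter, Finset.mem_univ, true_and] at hp ⊢
    exact ⟨fun h => hp.1 (by rw [ECswitchSeq_apply, h, Option.map_none]),
      fun h => hp.2 (hTi _ _ h)⟩
  obtain ⟨L, hL, hmono⟩ := ih _ (hn ▸ Finset.card_lt_card hsub) (hX.switchSeq T)
    (fun w => by rw [ECswitchSeq_apply, hloop, Option.map_none]) hTK rfl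
  exact ⟨T ++ L, hT.append hL, by rwa [ECswitchSeq_append]⟩

end Monochromatic

section Walks

variable {V : Type} {R : V → V → Prop}

def IsWalk (R : V → V → Prop) (a b : V) (n : ℕ) (w : ℕ → V) : Prop :=
  w 0 = a ∧ w n = b ∧ ∀ k < n, R (w k) (w (k + 1))

lemma IsWalk.exists_of_reflTransGen {a b : V} (h : Relation.ReflTransGen R a b) :
    ∃ n w, IsWalk R a b n w := by
  induction h with
  | refl => exact ⟨0, fun _ => a, rfl, rfl, by simp⟩
  | @tail b c _ hbc ih =>
    obtain ⟨n, w, h0, hn, hw⟩ := ih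
    refine ⟨n + 1, fun k => if k ≤ n then w k else c, by simp [h0], by simp, fun k hk => ?_⟩
    rcases Nat.lt_or_eq_of_le (Nat.le_of_lt_succ hk) with hk | rfl
    · simpa [hk.le, Nat.succ_le_of_lt hk] using hw k hk
    · simpa [hn] using hbc

lemma IsWalk.pad {a b s : V} {n : ℕ} {w : ℕ → V} (hw : IsWalk R a b n w) (has : R a s)
    (hsa : R s a) : IsWalk R a b (n + 2) fun k => if k = 1 then s else w (k - 2) := by
  obtain ⟨h0, hn, hstep⟩ := hw
  refine ⟨by simp [h0], by simp [hn], fun k hk => ?_⟩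
  match k with
  | 0 => simpa [h0] using has
  | 1 => simpa [h0] using hsa
  | k + 2 => simpa using hstep k (by omega)

lemma IsWalk.glue (hR : ∀ a b, R a b → R b a) {r u v : V} {n₁ n₂ : ℕ} {w₁ w₂ : ℕ → V}
    (h₁ : IsWalk R r u n₁ w₁) (h₂ : IsWalk R r v n₂ w₂) :
    ∃ W : ℕ → V, W (n₁ + 1 + n₂) = W 0 ∧ W n₁ = u ∧ W (n₁ + 1) = v ∧
      ∀ k < n₁ + 1 + n₂, k ≠ n₁ → R (W k) (W (k + 1)) := by
  obtain ⟨h₁0, h₁n, h₁step⟩ := h₁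
  obtain ⟨h₂0, h₂n, h₂step⟩ := h₂
  refine ⟨fun k => if k ≤ n₁ then w₁ k else w₂ (n₁ + 1 + n₂ - k),
    by simp [h₁0, h₂0, show ¬n₁ + 1 + n₂ ≤ n₁ by omega], by simp [h₁n], by simp [h₂n],
    fun k hk hkn => ?_⟩
  rcases Nat.lt_or_gt_of_ne hkn with hk' | hk'
  · simpa [hk'.le, Nat.succ_le_of_lt hk'] using h₁step k hk'
  · have h := hR _ _ (h₂step (n₁ + n₂ - k) (by omega))
    simp only [show ¬k ≤ n₁ by omega, show ¬k + 1 ≤ n₁ by omega, if_false]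
    rwa [show n₁ + n₂ - k + 1 = n₁ + 1 + n₂ - k by omega,
      show n₁ + n₂ - k = n₁ + 1 + n₂ - (k + 1) by omega] at h

lemma Relation.ReflTransGen.exists_rel_mem_notMem {a b : V} {S : Set V}
    (h : Relation.ReflTransGen R a b) (ha : a ∈ S) (hb : b ∉ S) : ∃ u ∈ S, ∃ v ∉ S, R u v := by
  induction h with
  | refl => exact absurd ha hb
  | @tail c d _ hcd ih =>
    by_cases hc : c ∈ S
    exacts [⟨c, hc, d, hb, hcd⟩, ih hc]

end Walks

section Normalization

variable {V : Type} [DecidableEq V] {m : ℕ} {Γ : Subgroup (Perm (Fin m))} {i : Fin m}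

lemma Conn.switch {X : EC V m} (hX : Conn X) (v : V) (π : Perm (Fin m)) :
    Conn (ECswitch X v π) := fun a b =>
  Relation.ReflTransGen.mono (fun c d h => (ECswitchSeq_isSome X [(v, π)] c d).trans h) _ _ (hX a b)

lemma exists_switch_reach_insert (htr : TransOn Γ) {X : EC V m} {S : Finset V} {r : V}
    (hreach : ∀ y ∈ S, Relation.ReflTransGen (fun a b => a ∈ S ∧ b ∈ S ∧ X a b = some i) r y)
    {u v : V} (hu : u ∈ S) (hv : v ∉ S) (huv : (X u v).isSome) :
    ∃ π ∈ Γ, ∀ y ∈ insert v S, Relation.ReflTransGen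
      (fun a b => a ∈ insert v S ∧ b ∈ insert v S ∧ ECswitch X v π a b = some i) r y := by
  obtain ⟨j, hj⟩ := Option.isSome_iff_exists.1 huv
  obtain ⟨π, hπ, hπj⟩ := htr j i
  have hinside : ∀ a ∈ S, ∀ b ∈ S, ECswitch X v π a b = X a b := fun a ha b hb => by
    simp [ECswitch, ne_of_mem_of_not_mem ha hv, ne_of_mem_of_not_mem hb hv]
  have hreach' : ∀ y ∈ S, Relation.ReflTransGen
      (fun a b => a ∈ insert v S ∧ b ∈ insert v S ∧ ECswitch X v π a b = some i) r y :=
    fun y hy => Relation.ReflTransGen.mono (fun a b ⟨ha, hb, hab⟩ =>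
      ⟨Finset.mem_insert_of_mem ha, Finset.mem_insert_of_mem hb, by rw [hinside a ha b hb, hab]⟩)
      _ _ (hreach y hy)
  refine ⟨π, hπ, fun y hy => ?_⟩
  rcases Finset.mem_insert.1 hy with rfl | hy
  · exact (hreach' u hu).tail ⟨Finset.mem_insert_of_mem hu, Finset.mem_insert_self _ _,
      by simp [ECswitch, hj, hπj]⟩
  · exact hreach' y hy

lemma exists_switchSeq_reach [Fintype V] (htr : TransOn Γ) {X : EC V m} (hX : Conn X) (r : V) :
    ∃ L, ValidSeq Γ L ∧
      ∀ v, Relation.ReflTransGen (fun a b => ECswitchSeq X L a b = some i) r v := by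
  suffices H : ∀ (n : ℕ) (X : EC V m), Conn X → ∀ S : Finset V, Sᶜ.card = n → r ∈ S →
      (∀ v ∈ S, Relation.ReflTransGen (fun a b => a ∈ S ∧ b ∈ S ∧ X a b = some i) r v) →
      ∃ L, ValidSeq Γ L ∧
        ∀ v, Relation.ReflTransGen (fun a b => ECswitchSeq X L a b = some i) r v
    from H _ X hX {r} rfl (Finset.mem_singleton_self r)
      fun v hv => by rw [Finset.mem_singleton.1 hv]
  intro n
  induction n with
  | zero =>
    intro X _ S hS _ hreach
    refine ⟨[], by simp [ValidSeq], fun v =>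
      Relation.ReflTransGen.mono (fun a b h => h.2.2) _ _ (hreach v ?_)⟩
    simp_all
  | succ n ih =>
    intro X hX S hS hr hreach
    obtain ⟨x, hx⟩ := Finset.card_pos.1 (by omega : 0 < Sᶜ.card)
    obtain ⟨u, hu, v, hv, huv⟩ :=
      (hX r x).exists_rel_mem_notMem (S := ↑S) hr (Finset.mem_compl.1 hx)
    obtain ⟨π, hπ, hreach'⟩ := exists_switch_reach_insert htr hreach hu hv huv
    obtain ⟨L, hL, hL'⟩ := ih (ECswitch X v π) (hX.switch v π) (insert v S)
      (by rw [Finset.compl_insert, Finset.card_erase_of_mem (by simpa), hS]; rfl)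
      (Finset.mem_insert_of_mem hr) hreach'
    exact ⟨(v, π) :: L, fun p hp => (List.mem_cons.1 hp).elim (· ▸ hπ) (hL p), hL'⟩

end Normalization

section NoBadCycle

variable {V : Type} {m : ℕ} {Γ : Subgroup (Perm (Fin m))} {i : Fin m}

-- no cycle of `F_Γ` maps `Γ`-switchably to `X`
def NoBadCycle (Γ : Subgroup (Perm (Fin m))) (X : EC V m) (i : Fin m) : Prop :=
  ∀ l, 3 ≤ l → ∀ c : ZMod l → Fin m, SwHom Γ (cycleFromFn l c) X → SwHomK2 Γ (cycleFromFn l c) i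

lemma NoBadCycle.loopless {X : EC V m} (hX : ECSymm X) (h : NoBadCycle Γ X i) (w : V) :
    X w w = none := by
  by_contra hw
  obtain ⟨j, hj⟩ := Option.ne_none_iff_exists'.1 hw
  have := (h 3 le_rfl (fun _ => j) <|
    swHom_cycleFromFn_of_closed_walk hX (fun _ => w) rfl fun _ _ => hj).even_of_cycle
  exact absurd this (by decide)

lemma NoBadCycle.odd_add_and_mem_switchClass {X : EC V m} (hX : ECSymm X)
    (h : NoBadCycle Γ X i) {r : V} {n : V → ℕ} {w : V → ℕ → V}
    (hw : ∀ v, IsWalk (fun a b => X a b = some i) r v (n v) (w v)) {a b : V} {j : Fin m}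
    (hab : X a b = some j) : Odd (n a + n b) ∧ j ∈ switchClass Γ i := by
  have hne : a ≠ b := by
    rintro rfl
    rw [h.loopless hX] at hab
    cases hab
  obtain ⟨s, hs⟩ : ∃ s, X r s = some i := by
    have h₀ : ∀ v, n v = 0 → v = r := fun v hv => by rw [← (hw v).2.1, hv, (hw v).1]
    have h₁ : ∀ v, n v ≠ 0 → X r (w v 1) = some i := fun v hv => by
      simpa [(hw v).1] using (hw v).2.2 0 (Nat.pos_of_ne_zero hv)
    by_cases ha : n a = 0
    · exact ⟨_, h₁ b fun hb => hne ((h₀ a ha).trans (h₀ b hb).symm)⟩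
    · exact ⟨_, h₁ a ha⟩
  -- padding the walk to `a` by `r s r` makes the closed walk below have length at least 3
  obtain ⟨W, hWl, hWa, hWb, hW⟩ := ((hw a).pad hs (by rwa [hX])).glue
    (fun x y hxy => by rwa [hX]) (hw b)
  set l := n a + 2 + 1 + n b
  have : NeZero l := ⟨by omega⟩
  have hinj : ∀ k < l, (k : ZMod l) = ((n a + 2 : ℕ) : ZMod l) → k = n a + 2 :=
    fun k hk hk' => by
    simpa [Nat.mod_eq_of_lt hk, Nat.mod_eq_of_lt (show n a + 2 < l by omega)] using
      (ZMod.natCast_eq_natCast_iff' _ _ _).1 hk'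
  have hC : SwHomK2 Γ
      (cycleFromFn l fun x => if x = ((n a + 2 : ℕ) : ZMod l) then j else i) i := by
    refine h l (by omega) _ (swHom_cycleFromFn_of_closed_walk hX W hWl fun k hk => ?_)
    by_cases hk' : k = n a + 2
    · simp [hk', hWa, hWb, hab]
    · rw [if_neg fun h => hk' (hinj k hk h)]
      exact hW k hk hk'
  refine ⟨?_, by simpa using hC.mem_switchClass_of_cycle fun x hx => if_neg hx⟩
  obtain ⟨t, ht⟩ := hC.even_of_cycle
  exact ⟨t - 2, by omega⟩

variable [DecidableEq V]

lemma NoBadCycle.switchSeq {X : EC V m} (h : NoBadCycle Γ X i) (hloop : ∀ w, X w w = none)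
    {L : List (V × Perm (Fin m))} (hL : ValidSeq Γ L) : NoBadCycle Γ (ECswitchSeq X L) i := by
  intro l hl c hC
  have : NeZero l := ⟨by omega⟩
  refine h l hl c (ECswitchSeq_invSeq X L ▸ hC.switchSeq (fun w => ?_) hL.invSeq)
  rw [ECswitchSeq_apply, hloop, Option.map_none]

lemma NoBadCycle.swHomK2 [Fintype V] {X : EC V m} (hX : ECSymm X) (h : NoBadCycle Γ X i) {r : V}
    (hreach : ∀ v, Relation.ReflTransGen (fun a b => X a b = some i) r v) : SwHomK2 Γ X i := by
  choose n w hw using fun v => IsWalk.exists_of_reflTransGen (hreach v)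
  have hedge := fun a b j (hab : X a b = some j) => h.odd_add_and_mem_switchClass hX hw hab
  obtain ⟨L, hL, hmono⟩ :=
    exists_switchSeq_mono hX (h.loopless hX) fun a b j hab => (hedge a b j hab).2
  refine ⟨L, hL, fun v => decide (Even (n v)), fun a b j hab => ⟨?_, hmono a b j hab⟩⟩
  obtain ⟨j₀, hj₀⟩ : ∃ j₀, X a b = some j₀ := by
    rw [← Option.isSome_iff_exists, ← ECswitchSeq_isSome _ L, hab]
    rfl
  have hodd := Nat.odd_add.1 (hedge a b j₀ hj₀).1
  have := Nat.not_even_iff_odd (n := n a)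
  simp only [ne_eq, decide_eq_decide]
  tauto

end NoBadCycle

/-- A connected `m`-edge-coloured graph `G` admits a `Γ`-switchable
homomorphism to `K₂^i` iff no coloured cycle that fails to map `Γ`-switchably to `K₂^i`
admits a `Γ`-switchable homomorphism into `G`. -/
theorem swhomK2_iff_no_bad_cycle {V : Type} [Fintype V] [DecidableEq V] {m : ℕ}
    (Γ : Subgroup (Perm (Fin m))) (htr : TransOn Γ) (G : EC V m) (hsym : ECSymm G)
    (hconn : Conn G) (i : Fin m) :
    SwHomK2 Γ G i ↔
      ∀ (l : ℕ), 3 ≤ l → ∀ c : ZMod l → Fin m,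
        ¬ SwHomK2 Γ (cycleFromFn l c) i → ¬ SwHom Γ (cycleFromFn l c) G := by
  constructor
  · intro hG l hl c hC hCG
    have : NeZero l := ⟨by omega⟩
    exact hC (hCG.swHomK2 hG)
  · intro H
    have hG : NoBadCycle Γ G i := fun l hl c hCG => not_not.1 fun hC => H l hl c hC hCG
    rcases isEmpty_or_nonempty V with _ | ⟨⟨r⟩⟩
    · exact ⟨[], by simp [ValidSeq], fun _ => true, fun u => isEmptyElim u⟩
    obtain ⟨L, hL, hreach⟩ := exists_switchSeq_reach htr hconn r (i := i)
    have hG₁ := hG.switchSeq (hG.loopless hsym) hL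
    obtain ⟨L', hL', f, hf⟩ := hG₁.swHomK2 (hsym.switchSeq L) hreach
    exact ⟨L ++ L', hL.append hL', f, by rwa [ECswitchSeq_append]⟩
end
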